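/- Suppose π ∈ S_n contains an entry i ∈ [n−1] appearing before i+1 but not immediately before i+1, and let π' be obtained by swapping the entries i and i+1 in π. Then |SC_{132}^{-1}(π)| ≤ |SC_{132}^{-1}(π')|. -/

import Mathlib

open List Finset

attribute [local instance] Classical.propDecidable

/-- Two lists (with distinct entries) have the same relative order. -/
def SameRel (u v : List ℕ) : Prop :=
  u.length = v.length ∧ ∀ i j, i < j → j < u.length →
    (u.getD i 0 < u.getD j 0 ↔ v.getD i 0 < v.getD j 0)

/-- `l` contains `σ` as a classical pattern. -/
def ContainsPat (l σ : List ℕ) : Prop := ∃ u, u.Sublist l ∧ SameRel u σ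

/-- `l` contains `σ` as a consecutive pattern. -/
def ContainsC (l σ : List ℕ) : Prop := ∃ u, u.IsInfix l ∧ SameRel u σ

/-- `l` avoids `σ` as a classical pattern. -/
def AvoidsPat (l σ : List ℕ) : Prop := ¬ ContainsPat l σ

/-- `l` avoids `σ` as a consecutive pattern. -/
def AvoidsC (l σ : List ℕ) : Prop := ¬ ContainsC l σ

/-- Generic right-greedy stack-sorting: push the next entry unless doing so creates a
`bad` stack (read top to bottom); otherwise pop the top of the stack to the output. -/
noncomputable def stackAux (bad : List ℕ → Prop) : List ℕ → List ℕ → List ℕ → List ℕ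
  | [], stack, out => out ++ stack
  | a :: rest, stack, out =>
    if bad (a :: stack) then
      match stack with
      | [] => stackAux bad rest [a] out
      | b :: s => stackAux bad (a :: rest) s (out ++ [b])
    else stackAux bad rest (a :: stack) out
  termination_by i s _ => 2 * i.length + s.length
  decreasing_by all_goals (first | omega | (simp [List.length_cons]; try omega))

noncomputable def SCgen (bad : List ℕ → Prop) (π : List ℕ) : List ℕ := stackAux bad π [] []

/-- The consecutive-`σ`-avoiding stack-sorting map. -/
noncomputable def SCc (σ : List ℕ) : List ℕ → List ℕ := SCgen (fun l => ContainsC l σ)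

/-- The classical-`σ`-avoiding stack-sorting map. -/
noncomputable def sCl (σ : List ℕ) : List ℕ → List ℕ := SCgen (fun l => ContainsPat l σ)

/-- `π` is (the one-line notation of) a permutation of `{1, …, n}`. -/
def IsPermList (n : ℕ) (π : List ℕ) : Prop := π.Perm ((List.range n).map (· + 1))

/-- Complementation on permutations of `{1, …, n}`. -/
def compl (n : ℕ) (π : List ℕ) : List ℕ := π.map (fun x => n + 1 - x)

/-- The finset of permutations of `{1, …, n}` in one-line notation. -/
def permsFinset (n : ℕ) : Finset (List ℕ) := ((List.range n).map (· + 1)).permutations.toFinset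

/-- The number of preimages of `π` in `S_n` under `f`. -/
noncomputable def preCount (f : List ℕ → List ℕ) (n : ℕ) (π : List ℕ) : ℕ :=
  ((permsFinset n).filter (fun τ => f τ = π)).card

/-!
Swapping the values `i` and `i + 1` maps `SC₁₃₂⁻¹(π)` injectively into `SC₁₃₂⁻¹(π')`, because on
`τ` and on its swap the machine makes the same push/pop decisions. The stack never contains a
consecutive 132, so a decision only compares the incoming entry with the top two stack entries,
and swapping `i, i + 1` can change that comparison only if (a) `i` lies directly on `i + 1` in
the stack, (b) `i + 1` lies directly on `i`, or (c) the incoming entry and the second stack entry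
are `i` and `i + 1`, with a larger entry between them. A pop never separates an ascending adjacent
pair of the stack, so (a) puts `i` immediately before `i + 1` in the output, (b) puts `i + 1`
before `i`, and (c) leads to one of these within one more step. Since `i` comes before `i + 1` in
`π`, but not immediately, none of them occurs.
-/

theorem List.Nodup.eq_of_pair_sublist_of_pair_sublist {α : Type*} {r : List α} {a b : α}
    (hr : r.Nodup) (hab : [a, b] <+ r) (hba : [b, a] <+ r) : a = b := by
  induction r with
  | nil => simp at hab
  | cons x r ih =>
    simp only [sublist_cons_iff] at *
    grind

theorem List.pair_getD_sublist {α : Type*} {l : List α} (d : α) {p q : ℕ} (hpq : p < q)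
    (hq : q < l.length) : [l.getD p d, l.getD q d] <+ l := by
  rw [getD_eq_getElem _ _ (hpq.trans hq), getD_eq_getElem _ _ hq]
  have hp : l[p] ∈ l.take q := mem_take_iff_getElem.2 ⟨p, by omega, rfl⟩
  refine ((singleton_sublist.2 hp).append
    (singleton_sublist.2 (mem_cons_self (l := l.drop (q + 1))))).trans ?_
  rw [← drop_eq_getElem_cons hq, take_append_drop]

theorem List.Nodup.not_pair_getD_infix {α : Type*} {l : List α} (hl : l.Nodup) (d : α)
    {p q : ℕ} (hpq : p + 1 < q) (hq : q < l.length) : ¬ [l.getD p d, l.getD q d] <:+: l := by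
  rw [getD_eq_getElem _ _ (by omega), getD_eq_getElem _ _ hq, infix_iff_getElem?]
  rintro ⟨k, -, h⟩
  obtain ⟨_, hk⟩ := getElem?_eq_some_iff.1 (h 0 (by simp))
  obtain ⟨_, hk₁⟩ := getElem?_eq_some_iff.1 (h 1 (by simp))
  have := hl.getElem_inj_iff.1 hk
  have := hl.getElem_inj_iff.1 hk₁
  omega

theorem List.Nodup.map_swap_perm {α : Type*} [DecidableEq α] {l : List α} {a b : α}
    (hl : l.Nodup) (ha : a ∈ l) (hb : b ∈ l) : l.map (Equiv.swap a b) ~ l := by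
  refine (perm_ext_iff_of_nodup (hl.map (Equiv.swap a b).injective) hl).2 fun x => ?_
  rw [List.mem_map]
  constructor
  · rintro ⟨y, hy, rfl⟩
    rw [Equiv.swap_apply_def]
    split_ifs <;> simp_all
  · intro hx
    refine ⟨Equiv.swap a b x, ?_, Equiv.swap_apply_self a b x⟩
    rw [Equiv.swap_apply_def]
    split_ifs <;> simp_all

inductive Consec132 : List ℕ → Prop
  | head {x y z : ℕ} (t : List ℕ) : x < y → x < z → z ≤ y → Consec132 (x :: y :: z :: t)
  | cons (a : ℕ) {l : List ℕ} : Consec132 l → Consec132 (a :: l)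

theorem Consec132.three_le_length {l : List ℕ} (h : Consec132 l) : 3 ≤ l.length := by
  induction h with
  | head => simp
  | cons _ _ ih => simp only [length_cons]; omega

theorem Consec132.append_left {l : List ℕ} (h : Consec132 l) (s : List ℕ) :
    Consec132 (s ++ l) := by
  induction s with
  | nil => exact h
  | cons a s ih => exact ih.cons a

theorem consec132_iff_exists {l : List ℕ} :
    Consec132 l ↔ ∃ s x y z t, l = s ++ x :: y :: z :: t ∧ x < y ∧ x < z ∧ z ≤ y := by
  constructor
  · intro h
    induction h with
    | head t h₁ h₂ h₃ => exact ⟨[], _, _, _, t, rfl, h₁, h₂, h₃⟩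
    | cons a _ ih =>
      obtain ⟨s, x, y, z, t, rfl, h⟩ := ih
      exact ⟨a :: s, x, y, z, t, rfl, h⟩
  · rintro ⟨s, x, y, z, t, rfl, h₁, h₂, h₃⟩
    exact (Consec132.head t h₁ h₂ h₃).append_left s

theorem containsC_132_iff {l : List ℕ} : ContainsC l [1, 3, 2] ↔ Consec132 l := by
  rw [consec132_iff_exists]
  constructor
  · rintro ⟨u, ⟨s, t, rfl⟩, hlen, hrel⟩
    match u, hlen with
    | [x, y, z], _ =>
      have h₁ := (hrel 0 1 (by omega) (by simp)).2
      have h₂ := (hrel 0 2 (by omega) (by simp)).2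
      have h₃ := (hrel 1 2 (by omega) (by simp)).1
      simp only [getD_cons_zero, getD_cons_succ] at h₁ h₂ h₃
      exact ⟨s, x, y, z, t, by simp, by omega, by omega, by omega⟩
  · rintro ⟨s, x, y, z, t, rfl, h₁, h₂, h₃⟩
    refine ⟨[x, y, z], ⟨s, t, by simp⟩, rfl, fun a b hab hb => ?_⟩
    simp only [length_cons, length_nil] at hb
    interval_cases b <;> interval_cases a <;> simp <;> omega

theorem consec132_cons_cons_cons_iff {x y z : ℕ} {t : List ℕ}
    (h : ¬ Consec132 (y :: z :: t)) :
    Consec132 (x :: y :: z :: t) ↔ x < y ∧ x < z ∧ z ≤ y := by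
  constructor
  · rintro (⟨_, h₁, h₂, h₃⟩ | ⟨_, h'⟩)
    · exact ⟨h₁, h₂, h₃⟩
    · exact absurd h' h
  · rintro ⟨h₁, h₂, h₃⟩
    exact .head t h₁ h₂ h₃

theorem SCc_132_eq : SCc [1, 3, 2] = fun τ => stackAux Consec132 τ [] [] := by
  funext τ
  simp only [SCc, SCgen, containsC_132_iff]

section StackAux

variable {bad : List ℕ → Prop}

theorem stackAux_nil (stack out : List ℕ) : stackAux bad [] stack out = out ++ stack := by
  rw [stackAux.eq_1]

theorem stackAux_cons_nil {a : ℕ} {rest out : List ℕ} (h : bad [a]) :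
    stackAux bad (a :: rest) [] out = stackAux bad rest [a] out := by
  rw [stackAux.eq_def]; simp only [if_pos h]

theorem stackAux_pop {a b : ℕ} {rest s out : List ℕ} (h : bad (a :: b :: s)) :
    stackAux bad (a :: rest) (b :: s) out = stackAux bad (a :: rest) s (out ++ [b]) := by
  rw [stackAux.eq_def]; simp only [if_pos h]

theorem stackAux_push {a : ℕ} {rest stack out : List ℕ} (h : ¬ bad (a :: stack)) :
    stackAux bad (a :: rest) stack out = stackAux bad rest (a :: stack) out := by
  rw [stackAux.eq_def]; simp only [if_neg h]

theorem stackAux_perm (inp stack out : List ℕ) :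
    stackAux bad inp stack out ~ out ++ stack ++ inp := by
  induction inp, stack, out using stackAux.induct bad with
  | case1 stack out => rw [stackAux_nil, append_nil]
  | case2 a rest out hb ih =>
    rw [stackAux_cons_nil hb]
    exact ih.trans (by simp)
  | case3 a rest out b s hb ih =>
    rw [stackAux_pop hb]
    exact ih.trans (by simp)
  | case4 a rest stack out hb ih =>
    rw [stackAux_push hb]
    exact ih.trans (by simpa using perm_middle.symm.append_left out)

theorem append_sublist_stackAux (inp stack out : List ℕ) :
    out ++ stack <+ stackAux bad inp stack out := by
  induction inp, stack, out using stackAux.induct bad with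
  | case1 stack out => rw [stackAux_nil]
  | case2 a rest out hb ih =>
    rw [stackAux_cons_nil hb]
    simpa using (sublist_append_left out [a]).trans ih
  | case3 a rest out b s hb ih =>
    rw [stackAux_pop hb]
    simpa using ih
  | case4 a rest stack out hb ih =>
    rw [stackAux_push hb]
    exact ((sublist_cons_self a stack).append_left out).trans ih

theorem List.Sublist.stackAux {l stack : List ℕ} (h : l <+ stack) (inp out : List ℕ) :
    l <+ stackAux bad inp stack out :=
  h.trans ((sublist_append_right out stack).trans (append_sublist_stackAux inp stack out))

end StackAux

/-- Popping `a` off `a :: b :: v` needs a consecutive 132 `c a b`, i.e. `b ≤ a`. -/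
theorem infix_stackAux_of_lt {a b : ℕ} (hab : a < b) {inp stack out : List ℕ}
    (hs : ¬ Consec132 stack) (h : [a, b] <:+: stack) :
    [a, b] <:+: stackAux Consec132 inp stack out := by
  induction inp, stack, out using stackAux.induct Consec132 with
  | case1 stack out => exact (stackAux_nil stack out) ▸ h.trans (suffix_append out stack).isInfix
  | case2 => exact absurd h.sublist (by simp)
  | case3 c rest out d s hb ih =>
    rw [stackAux_pop hb]
    rcases infix_cons_iff.1 h with ⟨v, hv⟩ | h
    · obtain ⟨rfl, rfl⟩ : d = a ∧ s = b :: v := by simpa [eq_comm] using hv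
      have := (consec132_cons_cons_cons_iff hs).1 hb
      omega
    · exact ih (fun h' => hs (h'.cons d)) h
  | case4 c rest stack out hb ih =>
    rw [stackAux_push hb]
    exact ih hb (h.trans (infix_cons (infix_refl stack)))

theorem not_consec132_cons_succ {i : ℕ} {t : List ℕ} (hs : ¬ Consec132 ((i + 1) :: t))
    (hnd : (i :: (i + 1) :: t).Nodup) : ¬ Consec132 (i :: (i + 1) :: t) := by
  rcases t with _ | ⟨w, t⟩
  · exact fun h => by simpa using h.three_le_length
  · rw [consec132_cons_cons_cons_iff hs]
    simp only [nodup_cons, List.mem_cons, not_or] at hnd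
    omega

theorem succ_pair_infix_stackAux {i y : ℕ} {rest t out : List ℕ} (hy : i + 1 < y)
    (hs : ¬ Consec132 (y :: (i + 1) :: t)) (hnd : (i :: (i + 1) :: t).Nodup) :
    [i, i + 1] <:+: stackAux Consec132 (i :: rest) (y :: (i + 1) :: t) out := by
  have hpop : Consec132 (i :: y :: (i + 1) :: t) := .head t (by omega) (by omega) (by omega)
  have hpush := not_consec132_cons_succ (fun h => hs (h.cons y)) hnd
  rw [stackAux_pop hpop, stackAux_push hpush]
  exact infix_stackAux_of_lt (lt_add_one i) hpush (prefix_append [i, i + 1] t).isInfix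

section Swap

open Equiv

variable {i : ℕ}

theorem swap_succ_pattern132_iff {x y z : ℕ} (hyz : y ≠ z)
    (hyz₁ : ¬ (y = i ∧ z = i + 1)) (hyz₂ : ¬ (y = i + 1 ∧ z = i))
    (hxz₁ : x = i → z = i + 1 → y ≤ i + 1) (hxz₂ : x = i + 1 → z = i → y ≤ i + 1) :
    (swap i (i + 1) x < swap i (i + 1) y ∧ swap i (i + 1) x < swap i (i + 1) z ∧
      swap i (i + 1) z ≤ swap i (i + 1) y) ↔ (x < y ∧ x < z ∧ z ≤ y) := by
  simp only [swap_apply_def]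
  split_ifs <;> omega

theorem consec132_swap_cons_map_iff {a : ℕ} {rest stack out : List ℕ}
    (hs : ¬ Consec132 stack) (hs' : ¬ Consec132 (stack.map (swap i (i + 1))))
    (hnd : (stackAux Consec132 (a :: rest) stack out).Nodup)
    (hsub : [i, i + 1] <+ stackAux Consec132 (a :: rest) stack out)
    (hinf : ¬ [i, i + 1] <:+: stackAux Consec132 (a :: rest) stack out) :
    Consec132 (swap i (i + 1) a :: stack.map (swap i (i + 1))) ↔ Consec132 (a :: stack) := by
  have hnd' : (a :: stack).Nodup := by
    have := (stackAux_perm (a :: rest) stack out).nodup_iff.1 hnd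
    rw [append_assoc, nodup_append, nodup_middle] at this
    exact this.2.1.sublist (by simp)
  have hrev : ¬ [i + 1, i] <+ stackAux Consec132 (a :: rest) stack out := fun h => by
    have := hnd.eq_of_pair_sublist_of_pair_sublist hsub h
    omega
  rcases stack with _ | ⟨y, _ | ⟨z, t⟩⟩
  case nil | cons.nil =>
    exact iff_of_false (fun h => by simpa using h.three_le_length)
      (fun h => by simpa using h.three_le_length)
  simp only [List.map_cons] at hs' ⊢
  rw [consec132_cons_cons_cons_iff hs', consec132_cons_cons_cons_iff hs]
  refine swap_succ_pattern132_iff (by simp_all) ?_ ?_ ?_ ?_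
  · rintro ⟨hy, hz⟩
    subst y z
    exact hinf (infix_stackAux_of_lt (lt_add_one i) hs (prefix_append [i, i + 1] t).isInfix)
  · rintro ⟨hy, hz⟩
    subst y z
    exact hrev ((sublist_append_left [i + 1, i] t).stackAux _ _)
  · intro ha hz
    subst a z
    by_contra! hy
    exact hinf (succ_pair_infix_stackAux hy hs (hnd'.sublist (.cons_cons i (.cons y (.refl _)))))
  · intro ha hz
    subst a z
    by_contra! hy
    have hpush : ¬ Consec132 ((i + 1) :: y :: i :: t) := by
      rw [consec132_cons_cons_cons_iff hs]
      omega
    rw [stackAux_push hpush] at hrev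
    exact hrev ((Sublist.cons_cons _ (.cons y (.cons_cons i (nil_sublist t)))).stackAux _ _)

theorem stackAux_map_swap {inp stack out : List ℕ}
    (hs : ¬ Consec132 stack) (hs' : ¬ Consec132 (stack.map (swap i (i + 1))))
    (hnd : (stackAux Consec132 inp stack out).Nodup)
    (hsub : [i, i + 1] <+ stackAux Consec132 inp stack out)
    (hinf : ¬ [i, i + 1] <:+: stackAux Consec132 inp stack out) :
    stackAux Consec132 (inp.map (swap i (i + 1))) (stack.map (swap i (i + 1)))
      (out.map (swap i (i + 1))) = (stackAux Consec132 inp stack out).map (swap i (i + 1)) := by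
  induction inp, stack, out using stackAux.induct Consec132 with
  | case1 stack out => simp only [List.map_nil, stackAux_nil, List.map_append]
  | case2 a rest out hb => exact absurd hb.three_le_length (by simp)
  | case3 a rest out b s hb ih =>
    have hb' := (consec132_swap_cons_map_iff hs hs' hnd hsub hinf).2 hb
    rw [stackAux_pop hb] at hnd hsub hinf ⊢
    simp only [List.map_cons] at hb' hs' ⊢
    rw [stackAux_pop hb']
    simpa using ih (fun h => hs (h.cons b)) (fun h => hs' (h.cons _)) hnd hsub hinf
  | case4 a rest stack out hb ih =>
    have hb' := mt (consec132_swap_cons_map_iff hs hs' hnd hsub hinf).1 hb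
    rw [stackAux_push hb] at hnd hsub hinf ⊢
    simp only [List.map_cons]
    rw [stackAux_push hb']
    exact ih hb hb' hnd hsub hinf

end Swap

/-- If i appears before i+1 but not immediately before it in π, then swapping
i and i+1 does not decrease the number of preimages under SC_{132}. -/
theorem swap_preimages_mono (n : ℕ) (π : List ℕ) (hπ : IsPermList n π)
    (i : ℕ) (hi1 : 1 ≤ i) (hi2 : i + 1 ≤ n)
    (p q : ℕ) (hq : q < π.length) (hpq : p + 1 < q)
    (hp' : π.getD p 0 = i) (hq' : π.getD q 0 = i + 1) :
    preCount (SCc [1, 3, 2]) n π ≤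
      preCount (SCc [1, 3, 2]) n
        (π.map (fun x => if x = i then i + 1 else if x = i + 1 then i else x)) := by
  have hswap : (fun x => if x = i then i + 1 else if x = i + 1 then i else x) =
      Equiv.swap i (i + 1) := funext fun x => (Equiv.swap_apply_def i (i + 1) x).symm
  have hbase : ((List.range n).map (· + 1)).Nodup := nodup_range.map (add_left_injective 1)
  have hnd : π.Nodup := hπ.nodup_iff.2 hbase
  have hsub : [i, i + 1] <+ π := by
    rw [← hq', ← hp']
    exact π.pair_getD_sublist 0 (by omega) hq
  have hinf : ¬ [i, i + 1] <:+: π := by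
    rw [← hq', ← hp']
    exact hnd.not_pair_getD_infix 0 hpq hq
  have hperm : ((List.range n).map (· + 1)).map (Equiv.swap i (i + 1)) ~
      (List.range n).map (· + 1) :=
    hbase.map_swap_perm (List.mem_map.2 ⟨i - 1, List.mem_range.2 (by omega), by omega⟩)
      (List.mem_map.2 ⟨i, List.mem_range.2 (by omega), rfl⟩)
  rw [preCount, preCount, hswap, SCc_132_eq]
  refine card_le_card_of_injOn (map (Equiv.swap i (i + 1))) (fun τ hτ => ?_)
    (map_injective_iff.2 (Equiv.swap i (i + 1)).injective).injOn
  simp only [coe_filter, permsFinset, mem_toFinset, mem_permutations] at hτ ⊢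
  obtain ⟨hτ, rfl⟩ := hτ
  refine ⟨(hτ.map _).trans hperm, ?_⟩
  simpa using stackAux_map_swap (by nofun) (by nofun) hnd hsub hinf
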